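/- Let T be a star with root r (the center) and leaves u₁,…,uₙ with edges eᵢ = (r,uᵢ). Let (T,c,p) be a security system with edge costs c(eᵢ) = cᵢ ordered c₁ ≤ ⋯ ≤ cₙ and prizes p(uᵢ) = pᵢ. If p' is obtained from p by swapping prizes pᵢ and pⱼ where i < j and pᵢ ≤ pⱼ, then for every budget B, maxp(B,c,p) ≤ maxp(B,c,p'). -/

import Mathlib

open Classical in
/-- `maxp n par c p B`: the maximum total prize of a system attack (a rooted
subtree, encoded as a parent-closed set `A` of non-root vertices of the rooted
tree on `Fin (n+1)` with root `0` and parent function `par`; the edge with head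
`v` has cost `c v` and the vertex `v` has prize `p v`) whose total edge-cost is
at most the budget `B`. -/
noncomputable def maxp (n : ℕ) (par : Fin (n+1) → Fin (n+1))
    (c p : Fin (n+1) → ℚ) (B : ℚ) : ℚ :=
  ((((Finset.univ.filter (fun v : Fin (n+1) => v ≠ 0)).powerset).filter
      (fun A => (∀ v ∈ A, par v = 0 ∨ par v ∈ A) ∧ ∑ v ∈ A, c v ≤ B)).image
    (fun A => ∑ v ∈ A, p v)).max.unbotD 0

/-- The multiset of values of `f` over the non-root vertices. -/
def valsNR (n : ℕ) (f : Fin (n+1) → ℚ) : Multiset ℚ :=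
  (Finset.univ.filter (fun v : Fin (n+1) => v ≠ 0)).val.map f

/-!
A feasible attack `A` for the prizes `p` is matched by a feasible attack for the swapped prizes
`p ∘ swap i j` with at least the same prize. If `A` contains `j` but not `i`, move the attack
from leaf `j` to the cheaper leaf `i`, which now carries the prize `p j`; otherwise keep `A`:
the swap then only exchanges prizes inside `A`, or replaces `p i` by the larger `p j`.
-/

open Finset Equiv

theorem Finset.unbotD_max_image_le_of_forall_exists {α β : Type*} [LinearOrder β]
    {s : Finset α} {f g : α → β} (d : β) (h : ∀ a ∈ s, ∃ b ∈ s, f a ≤ g b) :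
    (s.image f).max.unbotD d ≤ (s.image g).max.unbotD d := by
  rcases s.eq_empty_or_nonempty with rfl | hs
  · simp
  rw [← coe_max' (hs.image f), ← coe_max' (hs.image g), WithBot.unbotD_coe, WithBot.unbotD_coe]
  refine max'_le _ _ _ fun y hy => ?_
  obtain ⟨a, ha, rfl⟩ := mem_image.mp hy
  obtain ⟨b, hb, hab⟩ := h a ha
  exact hab.trans (le_max' _ _ (mem_image_of_mem g hb))

section Swap

variable {ι α : Type*} [DecidableEq ι] [Preorder α] {f : ι → α} {i j v : ι}

theorem le_comp_swap_of_ne_right (h : f i ≤ f j) (hv : v ≠ j) : f v ≤ f (swap i j v) := by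
  rcases eq_or_ne v i with rfl | hvi
  · simpa using h
  · rw [swap_apply_of_ne_of_ne hvi hv]

theorem comp_swap_le_of_ne_left (h : f i ≤ f j) (hv : v ≠ i) : f (swap i j v) ≤ f v := by
  rcases eq_or_ne v j with rfl | hvj
  · simpa using h
  · rw [swap_apply_of_ne_of_ne hv hvj]

end Swap

section Exchange

variable {ι M : Type*} [DecidableEq ι] [AddCommMonoid M] [PartialOrder M] [IsOrderedAddMonoid M]
  {f : ι → M} {i j : ι} {A : Finset ι}

theorem sum_le_sum_comp_swap (h : f i ≤ f j) (hA : j ∈ A → i ∈ A) :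
    ∑ v ∈ A, f v ≤ ∑ v ∈ A, f (swap i j v) := by
  by_cases hjA : j ∈ A
  · refine (Perm.sum_comp _ A f fun v hv => ?_).ge
    rcases eq_or_ne v i with rfl | hvi
    · exact hA hjA
    rcases eq_or_ne v j with rfl | hvj
    · exact hjA
    · exact absurd (swap_apply_of_ne_of_ne hvi hvj) hv
  · exact sum_le_sum fun v hv => le_comp_swap_of_ne_right h (ne_of_mem_of_not_mem hv hjA)

theorem sum_map_swap_le (h : f i ≤ f j) (hiA : i ∉ A) :
    ∑ v ∈ A.map (swap i j).toEmbedding, f v ≤ ∑ v ∈ A, f v := by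
  rw [sum_map]
  exact sum_le_sum fun v hv => comp_swap_le_of_ne_left h (ne_of_mem_of_not_mem hv hiA)

end Exchange

theorem exists_subset_insert_sum_le_of_swap {ι M N : Type*} [DecidableEq ι]
    [AddCommMonoid M] [PartialOrder M] [IsOrderedAddMonoid M]
    [AddCommMonoid N] [PartialOrder N] [IsOrderedAddMonoid N]
    {c : ι → M} {p : ι → N} {i j : ι} (hc : c i ≤ c j) (hp : p i ≤ p j) (A : Finset ι) :
    ∃ A' ⊆ insert i A, ∑ v ∈ A', c v ≤ ∑ v ∈ A, c v ∧ ∑ v ∈ A, p v ≤ ∑ v ∈ A', p (swap i j v) := by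
  by_cases hA : j ∈ A → i ∈ A
  · exact ⟨A, subset_insert i A, le_rfl, sum_le_sum_comp_swap hp hA⟩
  obtain ⟨hjA, hiA⟩ := Classical.not_imp.mp hA
  refine ⟨A.map (swap i j).toEmbedding, fun v hv => ?_, sum_map_swap_le hc hiA, ?_⟩
  · obtain ⟨w, hw, rfl⟩ := mem_map.mp hv
    rcases eq_or_ne w j with rfl | hwj
    · simp
    · rw [Equiv.toEmbedding_apply, swap_apply_of_ne_of_ne (ne_of_mem_of_not_mem hw hiA) hwj]
      exact mem_insert_of_mem hw
  · simp only [sum_map, Equiv.toEmbedding_apply, swap_apply_self, le_rfl]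

theorem maxp_le_maxp_of_forall_exists {n : ℕ} {par : Fin (n+1) → Fin (n+1)}
    {c p q : Fin (n+1) → ℚ} {B : ℚ}
    (h : ∀ A ⊆ univ.filter (· ≠ 0), (∀ v ∈ A, par v = 0 ∨ par v ∈ A) → ∑ v ∈ A, c v ≤ B →
      ∃ A' ⊆ univ.filter (· ≠ 0), (∀ v ∈ A', par v = 0 ∨ par v ∈ A') ∧ ∑ v ∈ A', c v ≤ B ∧
        ∑ v ∈ A, p v ≤ ∑ v ∈ A', q v) :
    maxp n par c p B ≤ maxp n par c q B := by
  refine unbotD_max_image_le_of_forall_exists 0 fun A hA => ?_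
  simp only [mem_filter, mem_powerset] at hA
  obtain ⟨A', hA', hpar, hcost, hprize⟩ := h A hA.1 hA.2.1 hA.2.2
  exact ⟨A', mem_filter.mpr ⟨mem_powerset.mpr hA', hpar, hcost⟩, hprize⟩

theorem stmt7_general (n : ℕ) (c p : Fin (n+1) → ℚ)
    (hcinc : ∀ v w : Fin (n+1), v ≠ 0 → v ≤ w → c v ≤ c w)
    (i j : Fin (n+1)) (hi : i ≠ 0) (hij : i < j) (hpij : p i ≤ p j)
    (B : ℚ) :
    maxp n (fun _ => 0) c p B ≤ maxp n (fun _ => 0) c (p ∘ Equiv.swap i j) B := by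
  refine maxp_le_maxp_of_forall_exists fun A hA _ hcost => ?_
  obtain ⟨A', hA'i, hcost', hprize⟩ :=
    exists_subset_insert_sum_le_of_swap (hcinc i j hi hij.le) hpij A
  have hA' : A' ⊆ univ.filter (· ≠ 0) :=
    hA'i.trans (insert_subset (by simpa using hi) hA)
  exact ⟨A', hA', fun _ _ => Or.inl rfl, hcost'.trans hcost, hprize⟩

/-- On a star rooted at its center (every non-root vertex is a child of the
root `0`) with edge costs increasing in the index, swapping prizes
`pᵢ ≤ pⱼ` for `i < j` never decreases the attacker's maximum prize. -/
theorem stmt7 (n : ℕ) (c p : Fin (n+1) → ℚ)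
    (hc : ∀ v, 0 ≤ c v) (hp : ∀ v, 0 ≤ p v)
    (hcinc : ∀ v w : Fin (n+1), v ≠ 0 → v ≤ w → c v ≤ c w)
    (i j : Fin (n+1)) (hi : i ≠ 0) (hij : i < j) (hpij : p i ≤ p j)
    (B : ℚ) (hB : 0 ≤ B) :
    maxp n (fun _ => 0) c p B ≤ maxp n (fun _ => 0) c (p ∘ Equiv.swap i j) B :=
  stmt7_general n c p hcinc i j hi hij hpij B
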